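/- (Balancing property of principal scores.) Under randomization and the positivity condition, for every g ∈ {1,...,J}, every z ∈ {1,...,J}, and every bounded measurable h : 𝒳 → ℝ, the following three quantities are equal (with the convention that S·1(Z=0)/π_0 := 0 when g = J): E[((p_{J−g+1}(X) − p_{J−g}(X))/p_z(X))·(S·1(Z=z)/π_z)·h(X)], E[(S·1(Z=J−g+1)/π_{J−g+1} − S·1(Z=J−g)/π_{J−g})·h(X)], and E[(p_{J−g+1}(X) − p_{J−g}(X))·h(X)]. If monotonicity additionally holds, then all three quantities equal E[h(X)·1(G=g)], where G := Σ_{z=1}^J S_z. -/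

import Mathlib

open MeasureTheory ProbabilityTheory

noncomputable section

namespace TruncationByDeath

variable {Ω : Type*} {𝒳 : Type*} [MeasurableSpace Ω] [MeasurableSpace 𝒳]

/-- The σ-algebra on `Ω` generated by the covariate map `X`. -/
def mX (X : Ω → 𝒳) : MeasurableSpace Ω := MeasurableSpace.comap X inferInstance

/-- Real-valued indicator of the event `{Z = z}`. -/
def indic (Z : Ω → ℕ) (z : ℕ) : Ω → ℝ := fun ω => if Z ω = z then 1 else 0

/-- Observed survival status `S := ∑_z 1(Z=z) ⬝ S_z`. -/
def Sobs (J : ℕ) (Z : Ω → ℕ) (S : ℕ → Ω → ℝ) : Ω → ℝ :=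
  fun ω => ∑ z ∈ Finset.Icc 1 J, indic Z z ω * S z ω

/-- Observed outcome `Y := ∑_z 1(Z=z) ⬝ Y_z`. -/
def Yobs (J : ℕ) (Z : Ω → ℕ) (Y : ℕ → Ω → ℝ) : Ω → ℝ :=
  fun ω => ∑ z ∈ Finset.Icc 1 J, indic Z z ω * Y z ω

/-- Principal score `p_z(X) := E[S_z | σ(X)]`, with conventions `p_0 := 0` and `p_{J+1} := 1`. -/
def pscore (P : Measure Ω) (X : Ω → 𝒳) (S : ℕ → Ω → ℝ) (J : ℕ) (z : ℕ) : Ω → ℝ :=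
  if z = 0 then fun _ => 0 else if z = J + 1 then fun _ => 1 else P[S z | mX X]

/-- Treatment probability `π_z := P(Z = z)`. -/
def piZ (P : Measure Ω) (Z : Ω → ℕ) (z : ℕ) : ℝ := (P {ω | Z ω = z}).toReal

/-- Principal stratum variable `G := ∑_{z=1}^J S_z`. -/
def Gsum (J : ℕ) (S : ℕ → Ω → ℝ) : Ω → ℝ := fun ω => ∑ z ∈ Finset.Icc 1 J, S z ω

/-- Real-valued indicator of the event `{G = g}`. -/
def indG (J : ℕ) (S : ℕ → Ω → ℝ) (g : ℕ) : Ω → ℝ :=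
  Set.indicator {ω | Gsum J S ω = (g : ℝ)} (fun _ => (1 : ℝ))

/-- Principal score of the stratum `g` : `e_g(X) := E[1(G=g) | σ(X)]`. -/
def eg (P : Measure Ω) (X : Ω → 𝒳) (J : ℕ) (S : ℕ → Ω → ℝ) (g : ℕ) : Ω → ℝ :=
  P[indG J S g | mX X]

/-- Basic setup: measurability, ranges, values and integrability of the primitives. -/
structure Setup (P : Measure Ω) (J : ℕ) (X : Ω → 𝒳) (Z : Ω → ℕ)
    (S Y : ℕ → Ω → ℝ) : Prop where
  hJ : 2 ≤ J
  hX : Measurable X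
  hZ : Measurable Z
  hZr : ∀ ω, Z ω ∈ Finset.Icc 1 J
  hSm : ∀ z, Measurable (S z)
  hS01 : ∀ z ω, S z ω = 0 ∨ S z ω = 1
  hYm : ∀ z, Measurable (Y z)
  hYint : ∀ z, Integrable (Y z) P

/-- Randomization : `Z` is independent of `(X, S_1,…,S_J, Y_1,…,Y_J)` and `π_z > 0` for all
`z ∈ {1,…,J}`. -/
def Randomization (P : Measure Ω) (J : ℕ) (X : Ω → 𝒳) (Z : Ω → ℕ)
    (S Y : ℕ → Ω → ℝ) : Prop :=
  IndepFun Z (fun ω => (X ω, fun z => S z ω, fun z => Y z ω)) P ∧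
    ∀ z ∈ Finset.Icc 1 J, 0 < piZ P Z z

/-- Monotonicity : `S_{z'} ≤ S_z` a.s. whenever `z' ≤ z`. -/
def Monotonicity (P : Measure Ω) (J : ℕ) (S : ℕ → Ω → ℝ) : Prop :=
  ∀ z ∈ Finset.Icc 1 J, ∀ z' ∈ Finset.Icc 1 J, z' ≤ z → ∀ᵐ ω ∂P, S z' ω ≤ S z ω

/-- Principal ignorability. -/
def PrincipalIgnorability (P : Measure Ω) (J : ℕ) (X : Ω → 𝒳)
    (S Y : ℕ → Ω → ℝ) : Prop :=
  ∀ z ∈ Finset.Icc 1 J, ∀ g ∈ Finset.Icc (J - z + 1) J, ∀ g' ∈ Finset.Icc (J - z + 1) J,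
    (fun ω => (P[fun ω' => Y z ω' * indG J S g ω' | mX X]) ω * eg P X J S g' ω)
      =ᵐ[P] fun ω => (P[fun ω' => Y z ω' * indG J S g' ω' | mX X]) ω * eg P X J S g ω

/-- Positivity : the principal scores are uniformly bounded away from zero. -/
def Positivity (P : Measure Ω) (J : ℕ) (X : Ω → 𝒳) (S : ℕ → Ω → ℝ) : Prop :=
  ∃ c : ℝ, 0 < c ∧ ∀ z ∈ Finset.Icc 1 J, ∀ᵐ ω ∂P, c ≤ pscore P X S J z ω

/-- Weighted survival term `S·1(Z=w)/π_w`, with the convention that it is `0` for `w = 0`. -/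
def wterm (P : Measure Ω) (J : ℕ) (Z : Ω → ℕ) (S : ℕ → Ω → ℝ) (w : ℕ) : Ω → ℝ :=
  if w = 0 then fun _ => 0
  else fun ω => Sobs J Z S ω * indic Z w ω / piZ P Z w

/-! Randomization makes the weight `S·1(Z=w)/π_w` an unbiased stand-in for `S_w` against any
function of the covariates, and the tower property replaces `S_w` by `p_w`; reweighting the
`z`-arm by `1/p_z` therefore returns `p_{J-g+1} - p_{J-g}`. Under monotonicity every profile
`(S_1, …, S_J)` is a staircase `(0, …, 0, 1, …, 1)`, so `S_{J-g+1} - S_{J-g}` (with `S_0 := 0`)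
is the indicator that exactly `g` of the `S_z` equal one. -/

open Finset in
theorem card_filter_eq_one_le_of_eq_zero {s : ℕ → ℝ} {J k : ℕ}
    (hs : MonotoneOn s (Set.Iic J)) (hkJ : k ≤ J) (hk : s k = 0) :
    #{x ∈ Icc 1 J | s x = 1} ≤ J - k := by
  calc #{x ∈ Icc 1 J | s x = 1} ≤ #(Icc (k + 1) J) := by
        refine card_le_card fun x hx => ?_
        simp only [mem_filter, mem_Icc] at hx ⊢
        refine ⟨?_, hx.1.2⟩
        by_contra! hxk
        have := hs (Set.mem_Iic.2 (by omega)) (Set.mem_Iic.2 hkJ) (Nat.lt_succ_iff.1 hxk)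
        linarith [hx.2]
    _ = J - k := by simp

open Finset in
theorem le_card_filter_eq_one_of_eq_one {s : ℕ → ℝ} {J k : ℕ}
    (h01 : ∀ x, s x = 0 ∨ s x = 1) (h0 : s 0 = 0) (hs : MonotoneOn s (Set.Iic J))
    (hkJ : k ≤ J) (hk : s k = 1) :
    J + 1 - k ≤ #{x ∈ Icc 1 J | s x = 1} := by
  have hk0 : k ≠ 0 := by rintro rfl; linarith
  calc J + 1 - k = #(Icc k J) := by simp
    _ ≤ #{x ∈ Icc 1 J | s x = 1} := by
        refine card_le_card fun x hx => ?_
        simp only [mem_filter, mem_Icc] at hx ⊢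
        have := hs (Set.mem_Iic.2 hkJ) (Set.mem_Iic.2 hx.2) hx.1
        refine ⟨⟨by omega, hx.2⟩, (h01 x).resolve_left fun hx0 => ?_⟩
        linarith

open Finset in
theorem sub_eq_ite_sum_eq {s : ℕ → ℝ} {J g : ℕ}
    (h01 : ∀ x, s x = 0 ∨ s x = 1) (h0 : s 0 = 0) (hs : MonotoneOn s (Set.Iic J))
    (hg : g ∈ Icc 1 J) :
    s (J - g + 1) - s (J - g) = if ∑ x ∈ Icc 1 J, s x = g then 1 else 0 := by
  rw [mem_Icc] at hg
  have hsum : ∑ x ∈ Icc 1 J, s x = #{x ∈ Icc 1 J | s x = 1} := by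
    rw [← sum_boole]
    exact sum_congr rfl fun x _ => by rcases h01 x with hx | hx <;> simp [hx]
  simp only [hsum, Nat.cast_inj]
  have hle : s (J - g) ≤ s (J - g + 1) :=
    hs (Set.mem_Iic.2 (by omega)) (Set.mem_Iic.2 (by omega)) (by omega)
  rcases h01 (J - g + 1) with ha | ha
  · have hb : s (J - g) = 0 := (h01 _).resolve_right fun hb => by linarith
    have := card_filter_eq_one_le_of_eq_zero hs (by omega) ha
    rw [if_neg (by omega), ha, hb, sub_zero]
  · rcases h01 (J - g) with hb | hb
    · have := card_filter_eq_one_le_of_eq_zero hs (by omega) hb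
      have := le_card_filter_eq_one_of_eq_one h01 h0 hs (by omega) ha
      rw [if_pos (by omega), ha, hb, sub_zero]
    · have := le_card_filter_eq_one_of_eq_one h01 h0 hs (by omega) hb
      rw [if_neg (by omega), ha, hb, sub_self]

theorem integral_condExp_mul {α : Type*} {m m₀ : MeasurableSpace α} {μ : Measure[m₀] α}
    (hm : m ≤ m₀) [SigmaFinite (μ.trim hm)] {f φ : α → ℝ}
    (hφ : StronglyMeasurable[m] φ) (hfφ : Integrable (f * φ) μ) (hf : Integrable f μ) :
    ∫ a, μ[f | m] a * φ a ∂μ = ∫ a, f a * φ a ∂μ :=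
  (integral_congr_ae (condExp_mul_of_stronglyMeasurable_right hφ hfφ hf)).symm.trans
    (integral_condExp hm)

theorem measurable_indic {α : Type*} {m : MeasurableSpace α} {Z : α → ℕ}
    (hZ : Measurable[m] Z) (w : ℕ) : Measurable[m] (indic Z w) :=
  (measurable_from_nat (f := fun n => if n = w then (1 : ℝ) else 0)).comp hZ

theorem norm_indic_le_one {α : Type*} (Z : α → ℕ) (w : ℕ) (a : α) : ‖indic Z w a‖ ≤ 1 := by
  unfold indic; split_ifs <;> simp

theorem integral_indic {P : Measure Ω} {Z : Ω → ℕ} (hZ : Measurable Z) (w : ℕ) :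
    ∫ ω, indic Z w ω ∂P = piZ P Z w := by
  have : indic Z w = {ω | Z ω = w}.indicator 1 := by
    ext ω; simp [indic, Set.indicator_apply]
  rw [this, integral_indicator_one (s := {ω | Z ω = w}) (hZ (measurableSet_singleton w)),
    measureReal_def, piZ]

theorem integral_indic_mul_of_indepFun {γ : Type*} [MeasurableSpace γ] {P : Measure Ω}
    {Z : Ω → ℕ} {W : Ω → γ} (hZ : Measurable Z) (hZW : IndepFun Z W P) {F : Ω → ℝ}
    (hF : Measurable[MeasurableSpace.comap W inferInstance] F) (hFi : Integrable F P) (w : ℕ) :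
    ∫ ω, indic Z w ω * F ω ∂P = piZ P Z w * ∫ ω, F ω ∂P := by
  have hind : IndepFun (indic Z w) F P := by
    rw [IndepFun_iff_Indep] at hZW ⊢
    exact indep_of_indep_of_le_left (indep_of_indep_of_le_right hZW hF.comap_le)
      (measurable_indic (comap_measurable Z) w).comap_le
  rw [hind.integral_fun_mul_eq_mul_integral (measurable_indic hZ w).aestronglyMeasurable
    hFi.aestronglyMeasurable, integral_indic hZ]

/-- `S_w`, with the convention `S_0 := 0` matching `p_0 := 0`. -/
def Sext (S : ℕ → Ω → ℝ) (w : ℕ) : Ω → ℝ := if w = 0 then 0 else S w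

theorem Sobs_mul_indic {α : Type*} {J : ℕ} {Z : α → ℕ} {S : ℕ → α → ℝ} {w : ℕ}
    (hw : w ∈ Finset.Icc 1 J) (ω : α) :
    Sobs J Z S ω * indic Z w ω = S w ω * indic Z w ω := by
  by_cases hZw : Z ω = w
  · simp [Sobs, indic, hZw, Finset.sum_ite_eq, hw]
  · simp [indic, hZw]

theorem wterm_of_mem {P : Measure Ω} {J : ℕ} {Z : Ω → ℕ} {S : ℕ → Ω → ℝ} {w : ℕ}
    (hw : w ∈ Finset.Icc 1 J) :
    wterm P J Z S w = fun ω => S w ω * indic Z w ω / piZ P Z w := by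
  have hw0 : w ≠ 0 := by rw [Finset.mem_Icc] at hw; omega
  ext ω
  simp only [wterm, if_neg hw0, Sobs_mul_indic hw]

theorem pscore_eq_condExp_Sext {P : Measure Ω} {X : Ω → 𝒳} {S : ℕ → Ω → ℝ} {J w : ℕ}
    (hw : w ≤ J) : pscore P X S J w = P[Sext S w | mX X] := by
  rcases Nat.eq_zero_or_pos w with rfl | hw0
  · simp [pscore, Sext]; rfl
  · simp [pscore, Sext, hw0.ne', show w ≠ J + 1 by omega]

theorem stronglyMeasurable_pscore (P : Measure Ω) (X : Ω → 𝒳) (S : ℕ → Ω → ℝ) (J w : ℕ) :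
    StronglyMeasurable[mX X] (pscore P X S J w) := by
  unfold pscore
  split_ifs
  exacts [stronglyMeasurable_const, stronglyMeasurable_const, stronglyMeasurable_condExp]

theorem integrable_pscore {P : Measure Ω} {X : Ω → 𝒳} {S : ℕ → Ω → ℝ} {J w : ℕ}
    (hw : w ≤ J) : Integrable (pscore P X S J w) P := by
  rw [pscore_eq_condExp_Sext hw]
  exact integrable_condExp

namespace Setup

variable {P : Measure Ω} {J : ℕ} {X : Ω → 𝒳} {Z : Ω → ℕ} {S Y : ℕ → Ω → ℝ}

theorem measurable_Sext (hset : Setup P J X Z S Y) (w : ℕ) : Measurable (Sext S w) := by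
  unfold Sext
  split_ifs
  exacts [measurable_const, hset.hSm w]

theorem norm_Sext_le_one (hset : Setup P J X Z S Y) (w : ℕ) (ω : Ω) :
    ‖Sext S w ω‖ ≤ 1 := by
  unfold Sext
  split_ifs
  · simp
  · rcases hset.hS01 w ω with h | h <;> simp [h]

theorem integrable_Sext [IsFiniteMeasure P] (hset : Setup P J X Z S Y) (w : ℕ) :
    Integrable (Sext S w) P :=
  .of_bound (hset.measurable_Sext w).aestronglyMeasurable 1
    (.of_forall (hset.norm_Sext_le_one w))

theorem integrable_Sext_mul (hset : Setup P J X Z S Y) (w : ℕ) {F : Ω → ℝ}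
    (hF : Integrable F P) : Integrable (fun ω => Sext S w ω * F ω) P :=
  hF.bdd_mul (hset.measurable_Sext w).aestronglyMeasurable
    (.of_forall (hset.norm_Sext_le_one w))

theorem integrable_wterm_mul (hset : Setup P J X Z S Y) {w : ℕ} (hw : w ≤ J) {F : Ω → ℝ}
    (hF : Integrable F P) : Integrable (fun ω => wterm P J Z S w ω * F ω) P := by
  rcases Nat.eq_zero_or_pos w with rfl | hw0
  · simp [wterm]
  have hwJ : w ∈ Finset.Icc 1 J := Finset.mem_Icc.2 ⟨hw0, hw⟩
  rw [wterm_of_mem hwJ]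
  refine hF.bdd_mul (c := (piZ P Z w)⁻¹)
    (((hset.hSm w).mul (measurable_indic hset.hZ w)).div_const _).aestronglyMeasurable
    (.of_forall fun ω => ?_)
  have hS : ‖S w ω‖ ≤ 1 := by simpa [Sext, hw0.ne'] using hset.norm_Sext_le_one w ω
  have hπ : 0 ≤ piZ P Z w := ENNReal.toReal_nonneg
  rw [norm_div, norm_mul, Real.norm_of_nonneg hπ, div_eq_mul_inv]
  exact mul_le_of_le_one_left (inv_nonneg.2 hπ)
    (mul_le_one₀ hS (norm_nonneg _) (norm_indic_le_one Z w ω))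

theorem mX_le (hset : Setup P J X Z S Y) : mX X ≤ ‹MeasurableSpace Ω› := hset.hX.comap_le

theorem integral_wterm_mul (hset : Setup P J X Z S Y) (hrand : Randomization P J X Z S Y)
    {w : ℕ} (hw : w ≤ J) {F : Ω → ℝ} (hF : StronglyMeasurable[mX X] F) (hFi : Integrable F P) :
    ∫ ω, wterm P J Z S w ω * F ω ∂P = ∫ ω, Sext S w ω * F ω ∂P := by
  rcases Nat.eq_zero_or_pos w with rfl | hw0
  · simp [wterm, Sext]
  have hwJ : w ∈ Finset.Icc 1 J := Finset.mem_Icc.2 ⟨hw0, hw⟩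
  set W := fun ω => (X ω, fun z => S z ω, fun z => Y z ω)
  have hXW : mX X ≤ MeasurableSpace.comap W inferInstance :=
    (measurable_fst.comp (comap_measurable W)).comap_le
  -- `S_w · F` is a function of `(X, S, Y)`, hence independent of `Z`.
  have hSF : Measurable[MeasurableSpace.comap W inferInstance] fun ω => S w ω * F ω :=
    (((measurable_pi_apply w).comp (measurable_fst.comp measurable_snd)).comp
      (comap_measurable W)).mul (hF.measurable.mono hXW le_rfl)
  have hSFi : Integrable (fun ω => S w ω * F ω) P := by
    simpa [Sext, hw0.ne'] using hset.integrable_Sext_mul w hFi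
  calc ∫ ω, wterm P J Z S w ω * F ω ∂P
      = (∫ ω, indic Z w ω * (S w ω * F ω) ∂P) / piZ P Z w := by
        rw [wterm_of_mem hwJ, ← integral_div]
        congr 1 with ω
        ring
    _ = ∫ ω, Sext S w ω * F ω ∂P := by
        rw [integral_indic_mul_of_indepFun hset.hZ hrand.1 hSF hSFi,
          mul_div_cancel_left₀ _ (hrand.2 w hwJ).ne']
        simp [Sext, hw0.ne']

theorem integral_wterm_sub_mul (hset : Setup P J X Z S Y) (hrand : Randomization P J X Z S Y)
    {a b : ℕ} (ha : a ≤ J) (hb : b ≤ J) {F : Ω → ℝ} (hF : StronglyMeasurable[mX X] F)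
    (hFi : Integrable F P) :
    ∫ ω, (wterm P J Z S a ω - wterm P J Z S b ω) * F ω ∂P
      = ∫ ω, (Sext S a ω - Sext S b ω) * F ω ∂P := by
  simp only [sub_mul]
  rw [integral_sub (hset.integrable_wterm_mul ha hFi) (hset.integrable_wterm_mul hb hFi),
    integral_sub (hset.integrable_Sext_mul a hFi) (hset.integrable_Sext_mul b hFi),
    hset.integral_wterm_mul hrand ha hF hFi, hset.integral_wterm_mul hrand hb hF hFi]

theorem integral_pscore_mul [IsFiniteMeasure P] (hset : Setup P J X Z S Y) {w : ℕ}
    (hw : w ≤ J) {F : Ω → ℝ} (hF : StronglyMeasurable[mX X] F) (hFi : Integrable F P) :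
    ∫ ω, pscore P X S J w ω * F ω ∂P = ∫ ω, Sext S w ω * F ω ∂P := by
  rw [pscore_eq_condExp_Sext hw]
  exact integral_condExp_mul hset.mX_le hF (hset.integrable_Sext_mul w hFi)
    (hset.integrable_Sext w)

theorem integral_pscore_sub_mul [IsFiniteMeasure P] (hset : Setup P J X Z S Y) {a b : ℕ}
    (ha : a ≤ J) (hb : b ≤ J) {F : Ω → ℝ} (hF : StronglyMeasurable[mX X] F)
    (hFi : Integrable F P) :
    ∫ ω, (pscore P X S J a ω - pscore P X S J b ω) * F ω ∂P
      = ∫ ω, (Sext S a ω - Sext S b ω) * F ω ∂P := by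
  have hSa := hset.integrable_Sext a
  have hSb := hset.integrable_Sext b
  have hSF : Integrable ((Sext S a - Sext S b) * F) P :=
    ((hset.integrable_Sext_mul a hFi).sub (hset.integrable_Sext_mul b hFi)).congr
      (.of_forall fun ω => by simp [sub_mul])
  calc ∫ ω, (pscore P X S J a ω - pscore P X S J b ω) * F ω ∂P
      = ∫ ω, P[Sext S a - Sext S b | mX X] ω * F ω ∂P := by
        refine integral_congr_ae ?_
        filter_upwards [condExp_sub hSa hSb (mX X)] with ω hω
        rw [hω, pscore_eq_condExp_Sext ha, pscore_eq_condExp_Sext hb, Pi.sub_apply]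
    _ = ∫ ω, (Sext S a ω - Sext S b ω) * F ω ∂P :=
        integral_condExp_mul hset.mX_le hF hSF (hSa.sub hSb)

theorem integral_wterm_mul_div_pscore [IsFiniteMeasure P] (hset : Setup P J X Z S Y)
    (hrand : Randomization P J X Z S Y) {z : ℕ} (hz : z ∈ Finset.Icc 1 J) {c : ℝ} (hc : 0 < c)
    (hpz : ∀ᵐ ω ∂P, c ≤ pscore P X S J z ω) {ψ : Ω → ℝ} (hψ : StronglyMeasurable[mX X] ψ)
    (hψi : Integrable ψ P) :
    ∫ ω, wterm P J Z S z ω * (ψ ω / pscore P X S J z ω) ∂P = ∫ ω, ψ ω ∂P := by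
  have hzJ : z ≤ J := (Finset.mem_Icc.1 hz).2
  have hp := (stronglyMeasurable_pscore P X S J z).measurable
  have hφ : StronglyMeasurable[mX X] fun ω => ψ ω / pscore P X S J z ω :=
    (hψ.measurable.div hp).stronglyMeasurable
  have hφi : Integrable (fun ω => ψ ω / pscore P X S J z ω) P := by
    refine (hψi.mul_bdd (c := c⁻¹) (hp.mono hset.mX_le le_rfl).inv.aestronglyMeasurable
      ?_).congr (.of_forall fun ω => by simp [div_eq_mul_inv])
    filter_upwards [hpz] with ω hω
    rw [Pi.inv_apply, norm_inv, Real.norm_of_nonneg (hc.le.trans hω)]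
    exact inv_anti₀ hc hω
  calc ∫ ω, wterm P J Z S z ω * (ψ ω / pscore P X S J z ω) ∂P
      = ∫ ω, pscore P X S J z ω * (ψ ω / pscore P X S J z ω) ∂P := by
        rw [hset.integral_wterm_mul hrand hzJ hφ hφi, hset.integral_pscore_mul hzJ hφ hφi]
    _ = ∫ ω, ψ ω ∂P := by
        refine integral_congr_ae ?_
        filter_upwards [hpz] with ω hω
        exact mul_div_cancel₀ _ (hc.trans_le hω).ne'

theorem Sext_sub_ae_eq_indG (hset : Setup P J X Z S Y) (hmono : Monotonicity P J S) {g : ℕ}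
    (hg : g ∈ Finset.Icc 1 J) :
    (fun ω => Sext S (J - g + 1) ω - Sext S (J - g) ω) =ᵐ[P] indG J S g := by
  have hmono_ae : ∀ᵐ ω ∂P, ∀ z ∈ Finset.Icc 1 J, ∀ z' ∈ Finset.Icc 1 J, z' ≤ z →
      S z' ω ≤ S z ω := by
    simp only [ae_all_iff, Filter.eventually_imp_distrib_left]
    exact hmono
  filter_upwards [hmono_ae] with ω hω
  have h01 : ∀ x, Sext S x ω = 0 ∨ Sext S x ω = 1 := fun x => by
    unfold Sext
    split_ifs
    exacts [.inl rfl, hset.hS01 x ω]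
  have hs : MonotoneOn (fun x => Sext S x ω) (Set.Iic J) := by
    intro x hx y hy hxy
    rcases Nat.eq_zero_or_pos x with rfl | hx0
    · show Sext S 0 ω ≤ Sext S y ω
      rcases h01 y with h | h <;> rw [h] <;> simp [Sext]
    · simp only [Sext, hx0.ne', (hx0.trans_le hxy).ne', if_false]
      exact hω y (Finset.mem_Icc.2 ⟨hx0.trans_le hxy, hy⟩) x
        (Finset.mem_Icc.2 ⟨hx0, hxy.trans hy⟩) hxy
  have hG : Gsum J S ω = ∑ x ∈ Finset.Icc 1 J, Sext S x ω :=
    Finset.sum_congr rfl fun x hx => by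
      simp [Sext, show x ≠ 0 by rw [Finset.mem_Icc] at hx; omega]
  rw [sub_eq_ite_sum_eq h01 (by simp [Sext]) hs hg]
  simp only [indG, Set.indicator_apply, Set.mem_ofPred_eq, hG]

end Setup

/-- **balancing property of principal scores.** Under randomization and
positivity, for every `g, z ∈ {1,…,J}` and every bounded measurable `h`, the three displayed
expectations coincide; if monotonicity additionally holds, they all equal
`E[h(X)·1(G=g)]`. -/
theorem statement8 (P : Measure Ω) [IsProbabilityMeasure P] (J : ℕ)
    (X : Ω → 𝒳) (Z : Ω → ℕ) (S Y : ℕ → Ω → ℝ)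
    (hset : Setup P J X Z S Y)
    (hrand : Randomization P J X Z S Y)
    (hpos : Positivity P J X S) :
    ∀ g ∈ Finset.Icc 1 J, ∀ z ∈ Finset.Icc 1 J, ∀ h : 𝒳 → ℝ,
      Measurable h → (∃ C, ∀ x, |h x| ≤ C) →
      (∫ ω, ((pscore P X S J (J - g + 1) ω - pscore P X S J (J - g) ω) / pscore P X S J z ω)
          * (Sobs J Z S ω * indic Z z ω / piZ P Z z) * h (X ω) ∂P
        = ∫ ω, (wterm P J Z S (J - g + 1) ω - wterm P J Z S (J - g) ω) * h (X ω) ∂P) ∧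
      (∫ ω, ((pscore P X S J (J - g + 1) ω - pscore P X S J (J - g) ω) / pscore P X S J z ω)
          * (Sobs J Z S ω * indic Z z ω / piZ P Z z) * h (X ω) ∂P
        = ∫ ω, (pscore P X S J (J - g + 1) ω - pscore P X S J (J - g) ω) * h (X ω) ∂P) ∧
      (Monotonicity P J S →
        ∫ ω, (pscore P X S J (J - g + 1) ω - pscore P X S J (J - g) ω) * h (X ω) ∂P
          = ∫ ω, h (X ω) * indG J S g ω ∂P) := by
  intro g hg z hz h hh ⟨C, hC⟩
  obtain ⟨c, hc, hpc⟩ := hpos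
  have hga : J - g + 1 ≤ J := by rw [Finset.mem_Icc] at hg; omega
  have hgb : J - g ≤ J := Nat.sub_le J g
  have hhX : StronglyMeasurable[mX X] fun ω => h (X ω) :=
    (hh.comp (comap_measurable X)).stronglyMeasurable
  have hhXi : Integrable (fun ω => h (X ω)) P :=
    .of_bound (hh.comp hset.hX).aestronglyMeasurable C (.of_forall fun ω => hC (X ω))
  have hΔ := hset.integral_pscore_sub_mul hga hgb hhX hhXi
  have hweighted :
      ∫ ω, ((pscore P X S J (J - g + 1) ω - pscore P X S J (J - g) ω) / pscore P X S J z ω)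
          * (Sobs J Z S ω * indic Z z ω / piZ P Z z) * h (X ω) ∂P
        = ∫ ω, (pscore P X S J (J - g + 1) ω - pscore P X S J (J - g) ω) * h (X ω) ∂P := by
    rw [← hset.integral_wterm_mul_div_pscore hrand hz hc (hpc z hz)
      (ψ := fun ω => (pscore P X S J (J - g + 1) ω - pscore P X S J (J - g) ω) * h (X ω))
      (((stronglyMeasurable_pscore P X S J _).sub (stronglyMeasurable_pscore P X S J _)).mul hhX)
      (((integrable_pscore hga).sub (integrable_pscore hgb)).mul_bdd
        (hh.comp hset.hX).aestronglyMeasurable (.of_forall fun ω => hC (X ω)))]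
    refine integral_congr_ae (.of_forall fun ω => ?_)
    simp only [wterm, if_neg (show z ≠ 0 by rw [Finset.mem_Icc] at hz; omega)]
    ring
  refine ⟨hweighted.trans (hΔ.trans (hset.integral_wterm_sub_mul hrand hga hgb hhX hhXi).symm),
    hweighted, fun hmono => hΔ.trans (integral_congr_ae ?_)⟩
  filter_upwards [hset.Sext_sub_ae_eq_indG hmono hg] with ω hω
  rw [hω, mul_comm]

end TruncationByDeath
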